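/- arXiv:math/0411173 — 3 statements merged into one kernel-verified Lean document; each statement's English description precedes it below -/
import Mathlib

section
/- Differentiated form of the invariance condition for an integrand: let J ⊆ ℝ be an open interval, let f : ℝ×ℝⁿ×ℝʳ → ℝ^d be continuously differentiable, let x : J → ℝⁿ and u : J → ℝʳ be continuously differentiable, and let (T, X, U) be a C² one-parameter family of transformations with (T,X,U)(t,y,v,0) = (t,y,v). If for every t ∈ J and every s ∈ (−ε,ε) one has f(t,x(t),u(t)) = f(T(t,x(t),u(t),s), X(t,x(t),u(t),s), U(t,x(t),u(t),s)) · (d/dt)[τ ↦ T(τ,x(τ),u(τ),s)](t), then for every t ∈ J: 0 = (∂f/∂t)·(∂T/∂s) + (∂f/∂y)(∂X/∂s) + (∂f/∂v)(∂U/∂s) + f(t,x(t),u(t)) · (d/dt)[τ ↦ ∂T/∂s(τ,x(τ),u(τ),0)](t), where the partial derivatives of f are evaluated at (t,x(t),u(t)) and the partial derivatives ∂T/∂s, ∂X/∂s, ∂U/∂s at (t,x(t),u(t),0). -/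
/-!
Put `a s = ∂_τ T(τ, x τ, u τ, s)|_{τ = t}` and `F s = f(T, X, U)(t, x t, u t, s)`. The invariance
condition says that `a s • F s` is constant in `s`, so its derivative `a 0 • F' 0 + a' 0 • F 0`
vanishes. As the family is the identity at `s = 0`, `a 0 = 1` and `F 0 = f(t, x t, u t)`, and the
chain rule splits `F' 0` into the three partial-derivative terms. Finally `a' 0 = ∂_s ∂_τ T` equals
`∂_τ ∂_s T` by the symmetry of the second derivative of the `C²` map `T`, evaluated along the
two-parameter family of points `(τ, x τ, u τ, 0) + s • (0, 0, 0, 1)`.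
-/

open Set Filter Topology

noncomputable section

section MixedPartials

variable {E F : Type*} [NormedAddCommGroup E] [NormedSpace ℝ E] [NormedAddCommGroup F]
  [NormedSpace ℝ F] {g : E → F} {c : ℝ → E} {c' e : E} {t : ℝ}

theorem hasDerivAt_add_smul (a e : E) (s : ℝ) : HasDerivAt (fun s : ℝ => a + s • e) e s := by
  simpa using ((hasDerivAt_id s).smul_const e).const_add a

theorem ContDiffAt.hasFDerivAt_fderiv {p : E} (hg : ContDiffAt ℝ 2 g p) :
    HasFDerivAt (fderiv ℝ g) (fderiv ℝ (fderiv ℝ g) p) p :=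
  ((hg.fderiv_right (m := 1) (by norm_num)).differentiableAt one_ne_zero).hasFDerivAt

theorem ContDiffAt.hasDerivAt_shift_deriv_curve (hg : ContDiffAt ℝ 2 g (c t))
    (hc : HasDerivAt c c' t) :
    HasDerivAt (fun s : ℝ => deriv (fun τ => g (c τ + s • e)) t)
      (fderiv ℝ (fderiv ℝ g) (c t) e c') 0 := by
  have hline : Tendsto (fun s : ℝ => c t + s • e) (𝓝 0) (𝓝 (c t)) := by
    simpa using (hasDerivAt_add_smul (c t) e 0).continuousAt.tendsto
  have hdiff : ∀ᶠ s : ℝ in 𝓝 0, DifferentiableAt ℝ g (c t + s • e) :=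
    hline.eventually ((hg.eventually (by simp)).mono fun _ h => h.differentiableAt two_ne_zero)
  have hslope : HasDerivAt (fun s : ℝ => fderiv ℝ g (c t + s • e) c')
      (fderiv ℝ (fderiv ℝ g) (c t) e c') 0 := by
    simpa using (hg.hasFDerivAt_fderiv.comp_hasDerivAt_of_eq 0 (hasDerivAt_add_smul (c t) e 0)
      (by simp)).clm_apply (hasDerivAt_const 0 c')
  refine hslope.congr_of_eventuallyEq ?_
  filter_upwards [hdiff] with s hs
  exact (hs.hasFDerivAt.comp_hasDerivAt t (hc.add_const _)).deriv

theorem ContDiffAt.hasDerivAt_curve_deriv_shift (hg : ContDiffAt ℝ 2 g (c t))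
    (hc : HasDerivAt c c' t) :
    HasDerivAt (fun τ => deriv (fun s : ℝ => g (c τ + s • e)) 0)
      (fderiv ℝ (fderiv ℝ g) (c t) c' e) t := by
  have hdiff : ∀ᶠ τ in 𝓝 t, DifferentiableAt ℝ g (c τ) := hc.continuousAt.eventually
    ((hg.eventually (by simp)).mono fun _ h => h.differentiableAt two_ne_zero)
  have hslope : HasDerivAt (fun τ => fderiv ℝ g (c τ) e) (fderiv ℝ (fderiv ℝ g) (c t) c' e) t := by
    simpa using (hg.hasFDerivAt_fderiv.comp_hasDerivAt t hc).clm_apply (hasDerivAt_const t e)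
  refine hslope.congr_of_eventuallyEq ?_
  filter_upwards [hdiff] with τ hτ
  exact (hτ.hasFDerivAt.comp_hasDerivAt_of_eq 0 (hasDerivAt_add_smul (c τ) e 0) (by simp)).deriv

theorem ContDiffAt.hasDerivAt_deriv_deriv_comm {G : ℝ → ℝ → F} (hg : ContDiffAt ℝ 2 g (c t))
    (hc : HasDerivAt c c' t) (hG : ∀ τ s, G τ s = g (c τ + s • e)) :
    HasDerivAt (fun s => deriv (fun τ => G τ s) t)
      (deriv (fun τ => deriv (fun s => G τ s) 0) t) 0 := by
  obtain rfl : G = fun τ s => g (c τ + s • e) := funext₂ hG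
  rw [(hg.hasDerivAt_curve_deriv_shift hc).deriv, hg.isSymmSndFDerivAt (by simp)]
  exact hg.hasDerivAt_shift_deriv_curve hc

end MixedPartials

section PartialDerivatives

variable {𝕜 E₁ E₂ E₃ F : Type*} [NontriviallyNormedField 𝕜]
  [NormedAddCommGroup E₁] [NormedSpace 𝕜 E₁] [NormedAddCommGroup E₂] [NormedSpace 𝕜 E₂]
  [NormedAddCommGroup E₃] [NormedSpace 𝕜 E₃] [NormedAddCommGroup F] [NormedSpace 𝕜 F]
  {f : E₁ × E₂ × E₃ → F}

theorem fderiv_apply_eq_sum_partials {a : E₁} {b : E₂} {c : E₃}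
    (hf : DifferentiableAt 𝕜 f (a, b, c)) (v₁ : E₁) (v₂ : E₂) (v₃ : E₃) :
    fderiv 𝕜 f (a, b, c) (v₁, v₂, v₃) =
      fderiv 𝕜 (fun y => f (y, b, c)) a v₁ + fderiv 𝕜 (fun y => f (a, y, c)) b v₂
        + fderiv 𝕜 (fun y => f (a, b, y)) c v₃ := by
  have h₁ : HasFDerivAt (fun y => f (y, b, c))
      ((fderiv 𝕜 f (a, b, c)).comp (ContinuousLinearMap.inl 𝕜 E₁ (E₂ × E₃))) a :=
    hf.hasFDerivAt.comp a (hasFDerivAt_prodMk_left a (b, c))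
  have h₂ : HasFDerivAt (fun y => f (a, y, c)) ((fderiv 𝕜 f (a, b, c)).comp
      ((ContinuousLinearMap.inr 𝕜 E₁ (E₂ × E₃)).comp (ContinuousLinearMap.inl 𝕜 E₂ E₃))) b :=
    hf.hasFDerivAt.comp b
      ((hasFDerivAt_prodMk_right a (b, c)).comp b (hasFDerivAt_prodMk_left b c))
  have h₃ : HasFDerivAt (fun y => f (a, b, y)) ((fderiv 𝕜 f (a, b, c)).comp
      ((ContinuousLinearMap.inr 𝕜 E₁ (E₂ × E₃)).comp (ContinuousLinearMap.inr 𝕜 E₂ E₃))) c :=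
    hf.hasFDerivAt.comp c
      ((hasFDerivAt_prodMk_right a (b, c)).comp c (hasFDerivAt_prodMk_right b c))
  simp only [h₁.fderiv, h₂.fderiv, h₃.fderiv, ContinuousLinearMap.comp_apply,
    ContinuousLinearMap.inl_apply, ContinuousLinearMap.inr_apply, ← map_add]
  simp

theorem HasDerivAt.comp_prodMk₃ {α : 𝕜 → E₁} {β : 𝕜 → E₂} {γ : 𝕜 → E₃}
    {α' : E₁} {β' : E₂} {γ' : E₃} {s : 𝕜} (hf : DifferentiableAt 𝕜 f (α s, β s, γ s))
    (hα : HasDerivAt α α' s) (hβ : HasDerivAt β β' s) (hγ : HasDerivAt γ γ' s) :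
    HasDerivAt (fun s => f (α s, β s, γ s))
      (fderiv 𝕜 (fun y => f (y, β s, γ s)) (α s) α' + fderiv 𝕜 (fun y => f (α s, y, γ s)) (β s) β'
        + fderiv 𝕜 (fun y => f (α s, β s, y)) (γ s) γ') s := by
  rw [← fderiv_apply_eq_sum_partials hf]
  exact hf.hasFDerivAt.comp_hasDerivAt s (hα.prodMk (hβ.prodMk hγ))

theorem DifferentiableAt.hasDerivAt_last_slice {g : E₁ → E₂ → E₃ → 𝕜 → F}
    {a : E₁} {b : E₂} {c : E₃} {s : 𝕜}
    (hg : DifferentiableAt 𝕜 (fun q : E₁ × E₂ × E₃ × 𝕜 => g q.1 q.2.1 q.2.2.1 q.2.2.2) (a, b, c, s)) :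
    HasDerivAt (g a b c) (deriv (g a b c) s) s := by
  have hslice : DifferentiableAt 𝕜 (fun s : 𝕜 => (a, b, c, s)) s := by fun_prop
  exact (hg.comp s hslice).hasDerivAt

end PartialDerivatives

/-- **Differentiated form of the invariance condition for an integrand.**

Let `J` be an open interval, `f : ℝ×ℝⁿ×ℝʳ → ℝ^d` be `C¹`, `x, u` be `C¹` on `J`,
and `(T,X,U)` a `C²` one-parameter family of transformations reducing to the
identity at the parameter value `s = 0`.  If for all `t ∈ J`, `s ∈ (-ε,ε)`,
`f(t,x(t),u(t)) = f(T,X,U)(t,x(t),u(t),s) ⬝ (d/dt) T(t,x(t),u(t),s)`,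
then differentiating with respect to `s` at `s = 0` gives, for every `t ∈ J`,
`0 = ∂f/∂t ∂T/∂s + ∂f/∂y ∂X/∂s + ∂f/∂v ∂U/∂s + f (d/dt) ∂T/∂s`. -/
theorem differentiated_invariance_integrand
    {n r d : ℕ} {J : Set ℝ} (hJ : ∃ c₁ c₂ : ℝ, J = Ioo c₁ c₂)
    (f : ℝ → (Fin n → ℝ) → (Fin r → ℝ) → (Fin d → ℝ))
    (hf : ContDiff ℝ 1 fun q : ℝ × (Fin n → ℝ) × (Fin r → ℝ) => f q.1 q.2.1 q.2.2)
    (x : ℝ → Fin n → ℝ) (u : ℝ → Fin r → ℝ)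
    (hx : ContDiffOn ℝ 1 x J) (hu : ContDiffOn ℝ 1 u J)
    (ε : ℝ) (hε : 0 < ε)
    (T : ℝ → (Fin n → ℝ) → (Fin r → ℝ) → ℝ → ℝ)
    (X : ℝ → (Fin n → ℝ) → (Fin r → ℝ) → ℝ → (Fin n → ℝ))
    (U : ℝ → (Fin n → ℝ) → (Fin r → ℝ) → ℝ → (Fin r → ℝ))
    -- the family of transformations is `C²`-smooth
    (hT : ContDiffOn ℝ 2
      (fun q : ℝ × (Fin n → ℝ) × (Fin r → ℝ) × ℝ => T q.1 q.2.1 q.2.2.1 q.2.2.2)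
      (univ ×ˢ univ ×ˢ univ ×ˢ Ioo (-ε) ε))
    (hX : ContDiffOn ℝ 2
      (fun q : ℝ × (Fin n → ℝ) × (Fin r → ℝ) × ℝ => X q.1 q.2.1 q.2.2.1 q.2.2.2)
      (univ ×ˢ univ ×ˢ univ ×ˢ Ioo (-ε) ε))
    (hU : ContDiffOn ℝ 2
      (fun q : ℝ × (Fin n → ℝ) × (Fin r → ℝ) × ℝ => U q.1 q.2.1 q.2.2.1 q.2.2.2)
      (univ ×ˢ univ ×ˢ univ ×ˢ Ioo (-ε) ε))
    -- at `s = 0` the family reduces to the identity transformation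
    (hid : ∀ (t : ℝ) (y : Fin n → ℝ) (v : Fin r → ℝ),
      T t y v 0 = t ∧ X t y v 0 = y ∧ U t y v 0 = v)
    -- the invariance condition
    (hinv : ∀ t ∈ J, ∀ s ∈ Ioo (-ε) ε,
      f t (x t) (u t) =
        (deriv (fun τ => T τ (x τ) (u τ) s) t) •
          f (T t (x t) (u t) s) (X t (x t) (u t) s) (U t (x t) (u t) s)) :
    -- the differentiated form of the invariance condition
    ∀ t ∈ J,
      (0 : Fin d → ℝ) =
        (deriv (fun s => T t (x t) (u t) s) 0) • (deriv (fun τ => f τ (x t) (u t)) t)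
        + fderiv ℝ (fun y => f t y (u t)) (x t) (deriv (fun s => X t (x t) (u t) s) 0)
        + fderiv ℝ (fun v => f t (x t) v) (u t) (deriv (fun s => U t (x t) (u t) s) 0)
        + (deriv (fun τ => deriv (fun s => T τ (x τ) (u τ) s) 0) t) • f t (x t) (u t) := by
  obtain ⟨c₁, c₂, rfl⟩ := hJ
  intro t ht
  obtain ⟨hT₀, hX₀, hU₀⟩ := hid t (x t) (u t)
  have hε₀ : Ioo (-ε) ε ∈ 𝓝 0 := Ioo_mem_nhds (neg_neg_iff_pos.2 hε) hε
  have hS : univ ×ˢ univ ×ˢ univ ×ˢ Ioo (-ε) ε ∈ 𝓝 (t, x t, u t, 0) :=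
    prod_mem_nhds univ_mem (prod_mem_nhds univ_mem (prod_mem_nhds univ_mem hε₀))
  have hF := HasDerivAt.comp_prodMk₃ (f := fun q => f q.1 q.2.1 q.2.2)
    (hf.differentiable one_ne_zero _)
    ((hT.contDiffAt hS).differentiableAt two_ne_zero).hasDerivAt_last_slice
    ((hX.contDiffAt hS).differentiableAt two_ne_zero).hasDerivAt_last_slice
    ((hU.contDiffAt hS).differentiableAt two_ne_zero).hasDerivAt_last_slice
  rw [hT₀, hX₀, hU₀] at hF
  have hc : HasDerivAt (fun τ => (τ, x τ, u τ, (0 : ℝ))) (1, deriv x t, deriv u t, 0) t :=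
    have hxt := (hx.differentiableOn one_ne_zero).differentiableAt (isOpen_Ioo.mem_nhds ht)
    have hut := (hu.differentiableOn one_ne_zero).differentiableAt (isOpen_Ioo.mem_nhds ht)
    (hasDerivAt_id t).prodMk (hxt.hasDerivAt.prodMk (hut.hasDerivAt.prodMk (hasDerivAt_const t 0)))
  set Tc := fun q : ℝ × (Fin n → ℝ) × (Fin r → ℝ) × ℝ => T q.1 q.2.1 q.2.2.1 q.2.2.2
  have hTc : ∀ τ s : ℝ, T τ (x τ) (u τ) s = Tc ((τ, x τ, u τ, 0) + s • (0, 0, 0, 1)) := by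
    simp [Tc]
  have ha := (hT.contDiffAt hS).hasDerivAt_deriv_deriv_comm hc hTc
  have ha₀ : deriv (fun τ => T τ (x τ) (u τ) 0) t = 1 := by
    simp only [fun τ => (hid τ (x τ) (u τ)).1, deriv_id'']
  have hzero := (ha.smul hF).unique ((hasDerivAt_const 0 (f t (x t) (u t))).congr_of_eventuallyEq
    (eventually_of_mem hε₀ fun s hs => (hinv t ht s hs).symm))
  rw [ha₀, one_smul, hT₀, hX₀, hU₀, fderiv_eq_smul_deriv] at hzero
  exact hzero.symm

end
end

section
/- Differentiated form of the invariance condition for the dynamics: let J ⊆ ℝ be an open interval, let φ : ℝ×ℝⁿ×ℝʳ → ℝⁿ be continuously differentiable, let x : J → ℝⁿ and u : J → ℝʳ be continuously differentiable, and let (T, X, U) be a C² one-parameter family of transformations with (T,X,U)(t,y,v,0) = (t,y,v). If for every t ∈ J and every s ∈ (−ε,ε) one has (d/dt)[τ ↦ X(τ,x(τ),u(τ),s)](t) = φ(T(t,x(t),u(t),s), X(t,x(t),u(t),s), U(t,x(t),u(t),s)) · (d/dt)[τ ↦ T(τ,x(τ),u(τ),s)](t), then for every t ∈ J: (d/dt)[τ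 ↦ ∂X/∂s(τ,x(τ),u(τ),0)](t) = (∂φ/∂t)·(∂T/∂s) + (∂φ/∂y)(∂X/∂s) + (∂φ/∂v)(∂U/∂s) + φ(t,x(t),u(t)) · (d/dt)[τ ↦ ∂T/∂s(τ,x(τ),u(τ),0)](t), where the partial derivatives of φ are evaluated at (t,x(t),u(t)) and the partial derivatives ∂T/∂s, ∂X/∂s, ∂U/∂s at (t,x(t),u(t),0). -/
/-!
Differentiate the invariance condition `∂ₜX = ∂ₜT • φ(T, X, U)` in `s` at `s = 0`. Along the
curve `τ ↦ (τ, x τ, u τ, s)` the mixed partials `∂ₛ∂ₜ` and `∂ₜ∂ₛ` of the `C²` maps `T` and `X`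
agree, by symmetry of the second Fréchet derivative; at `s = 0` the family is the identity, so
`∂ₜT = 1` and `(T, X, U) = (t, x t, u t)` there. The product and chain rules then give the claim,
once the derivative of `φ` is split into its three partial derivatives.
-/

open Set Filter Topology

section MixedPartials

variable {E F : Type*} [NormedAddCommGroup E] [NormedSpace ℝ E]
  [NormedAddCommGroup F] [NormedSpace ℝ F] {H : E → F} {c : ℝ → E} {c' : E} {t : ℝ}

theorem ContDiffAt.hasDerivAt_fderiv_apply_comp (hH : ContDiffAt ℝ 2 H (c t))
    (hc : HasDerivAt c c' t) (v : E) :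
    HasDerivAt (fun τ => fderiv ℝ H (c τ) v) (fderiv ℝ (fderiv ℝ H) (c t) c' v) t := by
  have hH' : DifferentiableAt ℝ (fderiv ℝ H) (c t) :=
    (hH.fderiv_right (m := 1) (by norm_num)).differentiableAt one_ne_zero
  simpa using (hH'.hasFDerivAt.comp_hasDerivAt t hc).clm_apply (hasDerivAt_const t v)

variable {U : Set E} {e : E}

theorem hasDerivAt_lineDeriv_comp (hH : ContDiffOn ℝ 2 H U) (hU : IsOpen U)
    (hc : HasDerivAt c c' t) (hct : c t ∈ U) :
    HasDerivAt (fun τ => lineDeriv ℝ H (c τ) e) (fderiv ℝ (fderiv ℝ H) (c t) c' e) t := by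
  have hUc : ∀ᶠ τ in 𝓝 t, c τ ∈ U := hc.continuousAt.preimage_mem_nhds (hU.mem_nhds hct)
  have hHt : ContDiffAt ℝ 2 H (c t) := hH.contDiffAt (hU.mem_nhds hct)
  refine (hHt.hasDerivAt_fderiv_apply_comp hc e).congr_of_eventuallyEq ?_
  filter_upwards [hUc] with τ hτ
  exact ((hH.contDiffAt (hU.mem_nhds hτ)).differentiableAt two_ne_zero).lineDeriv_eq_fderiv

theorem hasDerivAt_deriv_comp_add_smul (hH : ContDiffOn ℝ 2 H U) (hU : IsOpen U)
    (hc : HasDerivAt c c' t) (hct : c t ∈ U) :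
    HasDerivAt (fun s : ℝ => deriv (fun τ => H (c τ + s • e)) t)
      (fderiv ℝ (fderiv ℝ H) (c t) c' e) 0 := by
  have hline : HasDerivAt (fun s : ℝ => c t + s • e) e 0 := by
    simpa using ((hasDerivAt_id (0 : ℝ)).smul_const e).const_add (c t)
  have hUs : ∀ᶠ s in 𝓝 (0 : ℝ), c t + s • e ∈ U :=
    hline.continuousAt.preimage_mem_nhds (by simpa using hU.mem_nhds hct)
  have hHt : ContDiffAt ℝ 2 H (c t) := hH.contDiffAt (hU.mem_nhds hct)
  rw [hHt.isSymmSndFDerivAt (by simp) c' e]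
  have hfd := ContDiffAt.hasDerivAt_fderiv_apply_comp (c := fun s : ℝ => c t + s • e)
    (by simpa using hHt) hline c'
  rw [zero_smul, add_zero] at hfd
  refine hfd.congr_of_eventuallyEq ?_
  filter_upwards [hUs] with s hs
  have hHs := (hH.contDiffAt (hU.mem_nhds hs)).differentiableAt two_ne_zero
  exact (hHs.hasFDerivAt.comp_hasDerivAt t (hc.add_const (s • e))).deriv

end MixedPartials

section ParametrizedFamily

variable {A B F : Type*} [NormedAddCommGroup A] [NormedSpace ℝ A]
  [NormedAddCommGroup B] [NormedSpace ℝ B] [NormedAddCommGroup F] [NormedSpace ℝ F]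

theorem fderiv_uncurry3_apply {φ : ℝ → A → B → F} {t : ℝ} {y : A} {v : B}
    (hφ : DifferentiableAt ℝ (fun q : ℝ × A × B => φ q.1 q.2.1 q.2.2) (t, y, v))
    (a : ℝ) (b : A) (c : B) :
    fderiv ℝ (fun q : ℝ × A × B => φ q.1 q.2.1 q.2.2) (t, y, v) (a, b, c) =
      a • deriv (fun τ => φ τ y v) t + fderiv ℝ (fun y' => φ t y' v) y b
        + fderiv ℝ (fun v' => φ t y v') v c := by
  set L := fderiv ℝ (fun q : ℝ × A × B => φ q.1 q.2.1 q.2.2) (t, y, v)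
  have ht : HasDerivAt (fun τ => φ τ y v) (L (1, 0, 0)) t :=
    hφ.hasFDerivAt.comp_hasDerivAt (f := fun τ => (τ, y, v)) t
      ((hasDerivAt_id' t).prodMk ((hasDerivAt_const t y).prodMk (hasDerivAt_const t v)))
  have hy : HasFDerivAt (fun y' => φ t y' v) (L.comp ((0 : A →L[ℝ] ℝ).prod
      ((ContinuousLinearMap.id ℝ A).prod 0))) y :=
    hφ.hasFDerivAt.comp (f := fun y' => (t, y', v)) y
      ((hasFDerivAt_const t y).prodMk ((hasFDerivAt_id y).prodMk (hasFDerivAt_const v y)))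
  have hv : HasFDerivAt (fun v' => φ t y v') (L.comp ((0 : B →L[ℝ] ℝ).prod
      ((0 : B →L[ℝ] A).prod (ContinuousLinearMap.id ℝ B)))) v :=
    hφ.hasFDerivAt.comp (f := fun v' => (t, y, v')) v
      ((hasFDerivAt_const t v).prodMk ((hasFDerivAt_const y v).prodMk (hasFDerivAt_id v)))
  rw [ht.deriv, hy.fderiv, hv.fderiv, ← map_smul]
  simp only [ContinuousLinearMap.comp_apply, ContinuousLinearMap.prod_apply, ← map_add]
  simp

variable {G : ℝ → A → B → ℝ → F} {U : Set (ℝ × A × B × ℝ)}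

theorem hasDerivAt_param_of_contDiffOn {k : WithTop ℕ∞}
    (hG : ContDiffOn ℝ k (fun q : ℝ × A × B × ℝ => G q.1 q.2.1 q.2.2.1 q.2.2.2) U)
    (hk : k ≠ 0) (hU : IsOpen U) {t s : ℝ} {y : A} {v : B} (h : (t, y, v, s) ∈ U) :
    HasDerivAt (fun s' => G t y v s') (deriv (fun s' => G t y v s') s) s :=
  (((hG.contDiffAt (hU.mem_nhds h)).differentiableAt hk).comp s
    (f := fun s' : ℝ => (t, y, v, s')) (by fun_prop)).hasDerivAt

theorem exists_hasDerivAt_deriv_deriv_swap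
    (hG : ContDiffOn ℝ 2 (fun q : ℝ × A × B × ℝ => G q.1 q.2.1 q.2.2.1 q.2.2.2) U)
    (hU : IsOpen U) {x : ℝ → A} {u : ℝ → B} {x' : A} {u' : B} {t : ℝ}
    (hx : HasDerivAt x x' t) (hu : HasDerivAt u u' t) (ht : (t, x t, u t, 0) ∈ U) :
    ∃ d, HasDerivAt (fun τ => deriv (fun s => G τ (x τ) (u τ) s) 0) d t ∧
      HasDerivAt (fun s => deriv (fun τ => G τ (x τ) (u τ) s) t) d 0 := by
  set c : ℝ → ℝ × A × B × ℝ := fun τ => (τ, x τ, u τ, 0)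
  set e : ℝ × A × B × ℝ := (0, 0, 0, 1)
  have hce : ∀ τ s : ℝ, c τ + s • e = (τ, x τ, u τ, s) := by simp [c, e]
  have hc : HasDerivAt c (1, x', u', 0) t :=
    (hasDerivAt_id' t).prodMk (hx.prodMk (hu.prodMk (hasDerivAt_const t 0)))
  exact ⟨_, by simpa only [lineDeriv, hce] using hasDerivAt_lineDeriv_comp (e := e) hG hU hc ht,
    by simpa only [hce] using hasDerivAt_deriv_comp_add_smul (e := e) hG hU hc ht⟩

end ParametrizedFamily

/-- **Differentiated form of the invariance condition for the dynamics.**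

Let `J` be an open interval, `φ : ℝ×ℝⁿ×ℝʳ → ℝⁿ` be `C¹`, `x, u` be `C¹` on `J`,
and `(T,X,U)` a `C²` one-parameter family of transformations reducing to the
identity at the parameter value `s = 0`.  If for all `t ∈ J`, `s ∈ (-ε,ε)`,
`(d/dt) X(t,x(t),u(t),s) = φ((T,X,U)(t,x(t),u(t),s)) ⬝ (d/dt) T(t,x(t),u(t),s)`,
then differentiating with respect to `s` at `s = 0` gives, for every `t ∈ J`,
`(d/dt) ∂X/∂s = ∂φ/∂t ∂T/∂s + ∂φ/∂y ∂X/∂s + ∂φ/∂v ∂U/∂s + φ (d/dt) ∂T/∂s`. -/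
theorem differentiated_invariance_dynamics
    {n r : ℕ} {J : Set ℝ} (hJ : ∃ c₁ c₂ : ℝ, J = Ioo c₁ c₂)
    (φ : ℝ → (Fin n → ℝ) → (Fin r → ℝ) → (Fin n → ℝ))
    (hφ : ContDiff ℝ 1 fun q : ℝ × (Fin n → ℝ) × (Fin r → ℝ) => φ q.1 q.2.1 q.2.2)
    (x : ℝ → Fin n → ℝ) (u : ℝ → Fin r → ℝ)
    (hx : ContDiffOn ℝ 1 x J) (hu : ContDiffOn ℝ 1 u J)
    (ε : ℝ) (hε : 0 < ε)
    (T : ℝ → (Fin n → ℝ) → (Fin r → ℝ) → ℝ → ℝ)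
    (X : ℝ → (Fin n → ℝ) → (Fin r → ℝ) → ℝ → (Fin n → ℝ))
    (U : ℝ → (Fin n → ℝ) → (Fin r → ℝ) → ℝ → (Fin r → ℝ))
    -- the family of transformations is `C²`-smooth
    (hT : ContDiffOn ℝ 2
      (fun q : ℝ × (Fin n → ℝ) × (Fin r → ℝ) × ℝ => T q.1 q.2.1 q.2.2.1 q.2.2.2)
      (univ ×ˢ univ ×ˢ univ ×ˢ Ioo (-ε) ε))
    (hX : ContDiffOn ℝ 2
      (fun q : ℝ × (Fin n → ℝ) × (Fin r → ℝ) × ℝ => X q.1 q.2.1 q.2.2.1 q.2.2.2)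
      (univ ×ˢ univ ×ˢ univ ×ˢ Ioo (-ε) ε))
    (hU : ContDiffOn ℝ 2
      (fun q : ℝ × (Fin n → ℝ) × (Fin r → ℝ) × ℝ => U q.1 q.2.1 q.2.2.1 q.2.2.2)
      (univ ×ˢ univ ×ˢ univ ×ˢ Ioo (-ε) ε))
    -- at `s = 0` the family reduces to the identity transformation
    (hid : ∀ (t : ℝ) (y : Fin n → ℝ) (v : Fin r → ℝ),
      T t y v 0 = t ∧ X t y v 0 = y ∧ U t y v 0 = v)
    -- the invariance condition on the dynamics
    (hinv : ∀ t ∈ J, ∀ s ∈ Ioo (-ε) ε,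
      deriv (fun τ => X τ (x τ) (u τ) s) t =
        (deriv (fun τ => T τ (x τ) (u τ) s) t) •
          φ (T t (x t) (u t) s) (X t (x t) (u t) s) (U t (x t) (u t) s)) :
    -- the differentiated form of the invariance condition
    ∀ t ∈ J,
      deriv (fun τ => deriv (fun s => X τ (x τ) (u τ) s) 0) t =
        (deriv (fun s => T t (x t) (u t) s) 0) • (deriv (fun τ => φ τ (x t) (u t)) t)
        + fderiv ℝ (fun y => φ t y (u t)) (x t) (deriv (fun s => X t (x t) (u t) s) 0)
        + fderiv ℝ (fun v => φ t (x t) v) (u t) (deriv (fun s => U t (x t) (u t) s) 0)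
        + (deriv (fun τ => deriv (fun s => T τ (x τ) (u τ) s) 0) t) • φ t (x t) (u t) := by
  intro t ht
  obtain ⟨c₁, c₂, rfl⟩ := hJ
  have hx' : HasDerivAt x (deriv x t) t :=
    ((hx.contDiffAt (isOpen_Ioo.mem_nhds ht)).differentiableAt one_ne_zero).hasDerivAt
  have hu' : HasDerivAt u (deriv u t) t :=
    ((hu.contDiffAt (isOpen_Ioo.mem_nhds ht)).differentiableAt one_ne_zero).hasDerivAt
  have hΩ : IsOpen (univ ×ˢ univ ×ˢ univ ×ˢ Ioo (-ε) ε :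
      Set (ℝ × (Fin n → ℝ) × (Fin r → ℝ) × ℝ)) :=
    isOpen_univ.prod (isOpen_univ.prod (isOpen_univ.prod isOpen_Ioo))
  have h0 : (t, x t, u t, (0 : ℝ)) ∈ (univ ×ˢ univ ×ˢ univ ×ˢ Ioo (-ε) ε :
      Set (ℝ × (Fin n → ℝ) × (Fin r → ℝ) × ℝ)) := by simpa using hε
  obtain ⟨dT, hTts, hTst⟩ := exists_hasDerivAt_deriv_deriv_swap hT hΩ hx' hu' h0
  obtain ⟨dX, hXts, hXst⟩ := exists_hasDerivAt_deriv_deriv_swap hX hΩ hx' hu' h0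
  have hΦ := ((hφ.differentiable one_ne_zero) _).hasFDerivAt.comp_hasDerivAt 0
    ((hasDerivAt_param_of_contDiffOn hT two_ne_zero hΩ h0).prodMk
      ((hasDerivAt_param_of_contDiffOn hX two_ne_zero hΩ h0).prodMk
        (hasDerivAt_param_of_contDiffOn hU two_ne_zero hΩ h0)))
  simp only [Function.comp_def, hid] at hΦ
  have hinv₀ : (fun s => deriv (fun τ => X τ (x τ) (u τ) s) t) =ᶠ[𝓝 0] fun s =>
      deriv (fun τ => T τ (x τ) (u τ) s) t •
        φ (T t (x t) (u t) s) (X t (x t) (u t) s) (U t (x t) (u t) s) := by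
    filter_upwards [Ioo_mem_nhds (neg_neg_iff_pos.mpr hε) hε] with s hs
    exact hinv t ht s hs
  have hdX := hXst.unique ((hTst.smul hΦ).congr_of_eventuallyEq hinv₀)
  simp only [hid, deriv_id'', one_smul] at hdX
  rw [hXts.deriv, hTts.deriv, hdX, fderiv_uncurry3_apply ((hφ.differentiable one_ne_zero) _)]
end

section
/- Noether theorem for optimal control problems with isoperimetric constraints: let L : ℝ×ℝⁿ×ℝʳ → ℝ, φ : ℝ×ℝⁿ×ℝʳ → ℝⁿ and g : ℝ×ℝⁿ×ℝʳ → ℝ^{k+m} be continuously differentiable, Ω ⊆ ℝʳ, and let x : [a,b] → ℝⁿ, u : [a,b] → Ω ⊆ ℝʳ, ψ : [a,b] → ℝⁿ be continuously differentiable, ψ₀ ∈ ℝ, λ ∈ ℝ^{k+m}, satisfying for all t ∈ [a,b]: (i) ẋ(t) = φ(t,x(t),u(t)); (ii) ψ̇(t) = −∂H/∂y (t,x(t),u(t),ψ₀,ψ(t),λ), where H(t,y,v,ψ₀,p,λ) = ψ₀ L(t,y,v) + p·φ(t,y,v) + λ·g(t,y,v); (iii) H(t,x(t),u(t),ψ₀,ψ(t),λ)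 = max_{v ∈ Ω} H(t,x(t),v,ψ₀,ψ(t),λ); (iv) t ↦ H(t,x(t),u(t),ψ₀,ψ(t),λ) is differentiable with derivative equal to ∂H/∂t (t,x(t),u(t),ψ₀,ψ(t),λ). Suppose there exists a C² one-parameter family of transformations (T,X,U) with (T,X,U)(t,y,v,0) = (t,y,v), such that U(t,x(t),u(t),s) ∈ Ω for all t ∈ [a,b] and s ∈ (−ε,ε), and such that for all t ∈ [a,b] and s ∈ (−ε,ε) the invariance conditions hold: L(t,x(t),u(t)) = L(h^s(t,x(t),u(t))) · (d/dt)[τ ↦ T(τ,x(τ),u(τ),s)](t); (d/dt)[τ ↦ X(τ,x(τ),u(τ),s)](t) = φ(h^s(t,x(t),u(t))) · (d/dt)[τ ↦ T(τ,x(τ),u(τ),s)](t); and g(t,x(t),u(t)) = g(h^s(t,x(t),u(t))) · (d/dt)[τ ↦ T(τ,x(τ),u(τ),s)](t), where h^s(t,y,v) = (T(t,y,v,s), X(t,y,v,s), U(t,y,v,s)). Then the function t ↦ ψ(t)·∂X/∂s(t,x(t),u(t),0) − H(t,x(t),u(t),ψ₀,ψ(t),λ)·∂T/∂s(t,x(t),u(t),0)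 is constant on [a,b]. -/
open Set

noncomputable section

/-- Euclidean dot product on `Fin d → ℝ`. -/
def edot {d : ℕ} (p q : Fin d → ℝ) : ℝ := ∑ i, p i * q i

/-- The Hamiltonian `H(t,y,v,ψ₀,p,λ) = ψ₀ L(t,y,v) + p·φ(t,y,v) + λ·g(t,y,v)`
of the isoperimetric optimal control problem `(P₁)`. -/
def Ham {n r km : ℕ}
    (L : ℝ → (Fin n → ℝ) → (Fin r → ℝ) → ℝ)
    (φ : ℝ → (Fin n → ℝ) → (Fin r → ℝ) → (Fin n → ℝ))
    (g : ℝ → (Fin n → ℝ) → (Fin r → ℝ) → (Fin km → ℝ))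
    (t : ℝ) (y : Fin n → ℝ) (v : Fin r → ℝ)
    (ψ₀ : ℝ) (p : Fin n → ℝ) (lam : Fin km → ℝ) : ℝ :=
  ψ₀ * L t y v + edot p (φ t y v) + edot lam (g t y v)

/-!
Write `κ(s)` and `ξ(s)` for the `t`-derivatives of `T` and `X` along the transformed extremal
`τ ↦ h^s(τ, x(τ), u(τ))`. The invariance conditions say that
`κ(s) H(h^s(t, x, u)) - ψ · ξ(s) = ψ₀ L(t, x, u) + λ · g(t, x, u)` does not depend on `s`, so its
`s`-derivative at `s = 0` vanishes; in that derivative the `v`-part of `∂H` drops out because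
`s ↦ H(t, x, U(s))` is maximal at `s = 0`. By the symmetry of second derivatives, `κ'(0)` and
`ξ'(0)` are the `t`-derivatives of `∂T/∂s` and `∂X/∂s` along the extremal, and then the adjoint
equation and `dH/dt = ∂H/∂t` turn that identity into `d/dt (ψ · ∂X/∂s - H ∂T/∂s) = 0`.
-/

open Filter Topology

theorem edot_smul_right {d : ℕ} (p q : Fin d → ℝ) (c : ℝ) :
    edot p (c • q) = c * edot p q := by
  simp only [edot, Finset.mul_sum, Pi.smul_apply, smul_eq_mul, mul_left_comm]

theorem edot_neg_apply_single {d : ℕ} (f : (Fin d → ℝ) →L[ℝ] ℝ) (v : Fin d → ℝ) :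
    edot (fun i => -f (Pi.single i 1)) v = -f v := by
  conv_rhs => rw [pi_eq_sum_univ' v, map_sum]
  simp only [edot, map_smul, smul_eq_mul, mul_neg, Finset.sum_neg_distrib, mul_comm]

theorem HasDerivWithinAt.edot {d : ℕ} {p q : ℝ → Fin d → ℝ} {p' q' : Fin d → ℝ} {S : Set ℝ}
    {t : ℝ} (hp : HasDerivWithinAt p p' S t) (hq : HasDerivWithinAt q q' S t) :
    HasDerivWithinAt (fun τ => edot (p τ) (q τ)) (edot p' (q t) + edot (p t) q') S t := by
  have h := HasDerivWithinAt.fun_sum (u := Finset.univ) fun i _ =>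
    (hasDerivWithinAt_pi.1 hp i).fun_mul (hasDerivWithinAt_pi.1 hq i)
  rw [_root_.edot, _root_.edot, ← Finset.sum_add_distrib]
  exact h

theorem eq_of_hasDerivWithinAt_zero_Icc {W : Type*} [NormedAddCommGroup W] [NormedSpace ℝ W]
    {f : ℝ → W} {a b : ℝ} (hf : ∀ t ∈ Icc a b, HasDerivWithinAt f 0 (Icc a b) t) :
    ∀ t ∈ Icc a b, f t = f a :=
  constant_of_has_deriv_right_zero (fun t ht => (hf t ht).continuousWithinAt) fun t ht =>
    (hf t (Ico_subset_Icc_self ht)).mono_of_mem_nhdsWithin (Icc_mem_nhdsGE_of_mem ht)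

section Calculus

variable {E V W : Type*} [NormedAddCommGroup E] [NormedSpace ℝ E]
  [NormedAddCommGroup V] [NormedSpace ℝ V] [NormedAddCommGroup W] [NormedSpace ℝ W]

theorem HasDerivWithinAt.fderiv_apply {f : E → W} {c : ℝ → E} {w : E} {S : Set ℝ} {t : ℝ}
    (hf : ContDiffAt ℝ 2 f (c t)) (hc : HasDerivWithinAt c w S t) (e : E) :
    HasDerivWithinAt (fun τ => fderiv ℝ f (c τ) e) (fderiv ℝ (fderiv ℝ f) (c t) w e) S t := by
  have hf' : DifferentiableAt ℝ (fderiv ℝ f) (c t) :=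
    (hf.fderiv_right one_add_one_eq_two.le).differentiableAt one_ne_zero
  simpa using (hf'.hasFDerivAt.comp_hasDerivWithinAt t hc).clm_apply (hasDerivWithinAt_const t S e)

theorem ContinuousLinearMap.apply_triple (D : ℝ × E × V →L[ℝ] W) (a : ℝ) (y : E) (v : V) :
    D (a, y, v) = a • D (1, 0, 0) + D (0, y, 0) + D (0, 0, v) := by
  rw [← map_smul, ← map_add, ← map_add]
  simp

theorem deriv_eq_fderiv_apply_fst {f : ℝ × E × V → W} {t : ℝ} {y : E} {v : V}
    (hf : DifferentiableAt ℝ f (t, y, v)) :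
    deriv (fun τ => f (τ, y, v)) t = fderiv ℝ f (t, y, v) (1, 0, 0) :=
  (hf.hasFDerivAt.comp_hasDerivAt t
    ((hasDerivAt_id t).prodMk ((hasDerivAt_const t y).prodMk (hasDerivAt_const t v)))).deriv

theorem fderiv_eq_fderiv_apply_snd {f : ℝ × E × V → W} {t : ℝ} {y : E} {v : V}
    (hf : DifferentiableAt ℝ f (t, y, v)) (z : E) :
    fderiv ℝ (fun y' => f (t, y', v)) y z = fderiv ℝ f (t, y, v) (0, z, 0) := by
  have h : HasFDerivAt (fun y' => f (t, y', v))
      ((fderiv ℝ f (t, y, v)).comp ((0 : E →L[ℝ] ℝ).prod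
        ((ContinuousLinearMap.id ℝ E).prod (0 : E →L[ℝ] V)))) y :=
    hf.hasFDerivAt.comp y ((hasFDerivAt_const t y).prodMk
      ((hasFDerivAt_id y).prodMk (hasFDerivAt_const v y)))
  simp [h.fderiv]

theorem fderiv_apply_thd_eq_zero_of_eventually_le {f : ℝ × E × V → ℝ} {t : ℝ} {y : E} {v : V}
    {γ : ℝ → V} {γ' : V} (hf : DifferentiableAt ℝ f (t, y, v)) (hγ : HasDerivAt γ γ' 0)
    (hγ0 : γ 0 = v) (hmax : ∀ᶠ s in 𝓝 0, f (t, y, γ s) ≤ f (t, y, v)) :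
    fderiv ℝ f (t, y, v) (0, 0, γ') = 0 := by
  subst hγ0
  have hc : HasDerivAt (fun s => (t, y, γ s)) (0, 0, γ') 0 :=
    (hasDerivAt_const 0 t).prodMk ((hasDerivAt_const 0 y).prodMk hγ)
  exact IsLocalMax.hasDerivAt_eq_zero hmax (hf.hasFDerivAt.comp_hasDerivAt 0 hc)

variable {F : ℝ × E × V × ℝ → W} {ε : ℝ}

theorem ContDiffOn.contDiffAt_slab (hF : ContDiffOn ℝ 2 F (univ ×ˢ univ ×ˢ univ ×ˢ Ioo (-ε) ε))
    (τ : ℝ) (y : E) (v : V) {s : ℝ} (hs : s ∈ Ioo (-ε) ε) : ContDiffAt ℝ 2 F (τ, y, v, s) :=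
  hF.contDiffAt <| (isOpen_univ.prod (isOpen_univ.prod (isOpen_univ.prod isOpen_Ioo))).mem_nhds
    (by simpa using hs)

theorem hasDerivAt_mk_param (τ : ℝ) (y : E) (v : V) (s : ℝ) :
    HasDerivAt (fun s' : ℝ => (τ, y, v, s')) ((0, 0, 0, 1) : ℝ × E × V × ℝ) s :=
  (hasDerivAt_const s τ).prodMk
    ((hasDerivAt_const s y).prodMk ((hasDerivAt_const s v).prodMk (hasDerivAt_id s)))

theorem hasDerivAt_param {τ : ℝ} {y : E} {v : V} {s : ℝ}
    (hF : DifferentiableAt ℝ F (τ, y, v, s)) :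
    HasDerivAt (fun s' => F (τ, y, v, s')) (fderiv ℝ F (τ, y, v, s) (0, 0, 0, 1)) s :=
  hF.hasFDerivAt.comp_hasDerivAt s (hasDerivAt_mk_param τ y v s)

theorem ContDiffOn.differentiableAt_param
    (hF : ContDiffOn ℝ 2 F (univ ×ˢ univ ×ˢ univ ×ˢ Ioo (-ε) ε)) (τ : ℝ) (y : E) (v : V) {s : ℝ}
    (hs : s ∈ Ioo (-ε) ε) : DifferentiableAt ℝ (fun s' => F (τ, y, v, s')) s :=
  (hasDerivAt_param ((hF.contDiffAt_slab τ y v hs).differentiableAt two_ne_zero)).differentiableAt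

variable {x : ℝ → E} {u : ℝ → V} {x' : E} {u' : V} {S : Set ℝ} {t : ℝ}

theorem hasDerivWithinAt_mk_trajectory (hx : HasDerivWithinAt x x' S t)
    (hu : HasDerivWithinAt u u' S t) (s : ℝ) :
    HasDerivWithinAt (fun τ => (τ, x τ, u τ, s)) ((1, x', u', 0) : ℝ × E × V × ℝ) S t :=
  (hasDerivWithinAt_id t S).prodMk (hx.prodMk (hu.prodMk (hasDerivWithinAt_const t S s)))

theorem hasDerivAt_derivWithin_trajectory
    (hF : ContDiffOn ℝ 2 F (univ ×ˢ univ ×ˢ univ ×ˢ Ioo (-ε) ε)) (hε : 0 < ε)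
    (hx : HasDerivWithinAt x x' S t) (hu : HasDerivWithinAt u u' S t)
    (hS : UniqueDiffWithinAt ℝ S t) :
    HasDerivAt (fun s => derivWithin (fun τ => F (τ, x τ, u τ, s)) S t)
      (fderiv ℝ (fderiv ℝ F) (t, x t, u t, 0) (0, 0, 0, 1) (1, x', u', 0)) 0 := by
  have h0 : (0 : ℝ) ∈ Ioo (-ε) ε := ⟨neg_lt_zero.2 hε, hε⟩
  have h := HasDerivWithinAt.fderiv_apply (hF.contDiffAt_slab t (x t) (u t) h0)
    ((hasDerivAt_mk_param t (x t) (u t) 0).hasDerivWithinAt (s := univ)) (1, x', u', 0)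
  refine (hasDerivWithinAt_univ.1 h).congr_of_eventuallyEq ?_
  filter_upwards [Ioo_mem_nhds h0.1 h0.2] with s hs
  have hFs := (hF.contDiffAt_slab t (x t) (u t) hs).differentiableAt two_ne_zero
  exact (hFs.hasFDerivAt.comp_hasDerivWithinAt t
    (hasDerivWithinAt_mk_trajectory hx hu s)).derivWithin hS

theorem hasDerivWithinAt_deriv_param_trajectory
    (hF : ContDiffOn ℝ 2 F (univ ×ˢ univ ×ˢ univ ×ˢ Ioo (-ε) ε)) (hε : 0 < ε)
    (hx : HasDerivWithinAt x x' S t) (hu : HasDerivWithinAt u u' S t) :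
    HasDerivWithinAt (fun τ => deriv (fun s => F (τ, x τ, u τ, s)) 0)
      (fderiv ℝ (fderiv ℝ F) (t, x t, u t, 0) (0, 0, 0, 1) (1, x', u', 0)) S t := by
  have h0 : (0 : ℝ) ∈ Ioo (-ε) ε := ⟨neg_lt_zero.2 hε, hε⟩
  have hFt := hF.contDiffAt_slab t (x t) (u t) h0
  have h := HasDerivWithinAt.fderiv_apply hFt (hasDerivWithinAt_mk_trajectory hx hu 0)
    (0, 0, 0, 1)
  rw [hFt.isSymmSndFDerivAt (by simp)] at h
  refine h.congr (fun τ _ => ?_) ?_ <;>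
    exact (hasDerivAt_param ((hF.contDiffAt_slab _ _ _ h0).differentiableAt two_ne_zero)).deriv

end Calculus

section Noether

variable {n r km : ℕ}

def hamProd (L : ℝ → (Fin n → ℝ) → (Fin r → ℝ) → ℝ)
    (φ : ℝ → (Fin n → ℝ) → (Fin r → ℝ) → (Fin n → ℝ))
    (g : ℝ → (Fin n → ℝ) → (Fin r → ℝ) → (Fin km → ℝ))
    (ψ₀ : ℝ) (p : Fin n → ℝ) (lam : Fin km → ℝ) : ℝ × (Fin n → ℝ) × (Fin r → ℝ) → ℝ :=
  fun q => Ham L φ g q.1 q.2.1 q.2.2 ψ₀ p lam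

def noetherCharge (L : ℝ → (Fin n → ℝ) → (Fin r → ℝ) → ℝ)
    (φ : ℝ → (Fin n → ℝ) → (Fin r → ℝ) → (Fin n → ℝ))
    (g : ℝ → (Fin n → ℝ) → (Fin r → ℝ) → (Fin km → ℝ)) (ψ₀ : ℝ) (lam : Fin km → ℝ)
    (T : ℝ → (Fin n → ℝ) → (Fin r → ℝ) → ℝ → ℝ)
    (X : ℝ → (Fin n → ℝ) → (Fin r → ℝ) → ℝ → (Fin n → ℝ))
    (x : ℝ → Fin n → ℝ) (u : ℝ → Fin r → ℝ) (ψ : ℝ → Fin n → ℝ) (τ : ℝ) : ℝ :=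
  edot (ψ τ) (deriv (fun s => X τ (x τ) (u τ) s) 0) -
    Ham L φ g τ (x τ) (u τ) ψ₀ (ψ τ) lam * deriv (fun s => T τ (x τ) (u τ) s) 0

variable {L : ℝ → (Fin n → ℝ) → (Fin r → ℝ) → ℝ}
  {φ : ℝ → (Fin n → ℝ) → (Fin r → ℝ) → (Fin n → ℝ)}
  {g : ℝ → (Fin n → ℝ) → (Fin r → ℝ) → (Fin km → ℝ)} {ψ₀ : ℝ} {lam : Fin km → ℝ}

theorem contDiff_hamProd
    (hL : ContDiff ℝ 1 fun q : ℝ × (Fin n → ℝ) × (Fin r → ℝ) => L q.1 q.2.1 q.2.2)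
    (hφ : ContDiff ℝ 1 fun q : ℝ × (Fin n → ℝ) × (Fin r → ℝ) => φ q.1 q.2.1 q.2.2)
    (hg : ContDiff ℝ 1 fun q : ℝ × (Fin n → ℝ) × (Fin r → ℝ) => g q.1 q.2.1 q.2.2)
    (p : Fin n → ℝ) : ContDiff ℝ 1 (hamProd L φ g ψ₀ p lam) :=
  ((contDiff_const.mul hL).add (ContDiff.sum fun i _ =>
    contDiff_const.mul (contDiff_pi.1 hφ i))).add
    (ContDiff.sum fun i _ => contDiff_const.mul (contDiff_pi.1 hg i))

theorem mul_ham_sub_edot_eq_of_invariant {t : ℝ} {y : Fin n → ℝ} {v : Fin r → ℝ} {κ l : ℝ}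
    {ξ : Fin n → ℝ} {γ : Fin km → ℝ} (p : Fin n → ℝ) (hL : l = L t y v * κ)
    (hφ : ξ = κ • φ t y v) (hg : γ = κ • g t y v) :
    κ * Ham L φ g t y v ψ₀ p lam - edot p ξ = ψ₀ * l + edot lam γ := by
  rw [hL, hφ, hg, edot_smul_right, edot_smul_right, Ham]
  ring

theorem deriv_mul_comp_sub_edot_eq_zero_of_eventually_eq {P : Type*} [NormedAddCommGroup P]
    [NormedSpace ℝ P] {H : P → ℝ} {h : ℝ → P} {h' : P} {κ : ℝ → ℝ} {κ' : ℝ}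
    {ξ : ℝ → Fin n → ℝ} {ξ' : Fin n → ℝ} {p : Fin n → ℝ} {c : ℝ}
    (hH : DifferentiableAt ℝ H (h 0)) (hh : HasDerivAt h h' 0)
    (hκ : HasDerivAt κ κ' 0) (hξ : HasDerivAt ξ ξ' 0)
    (hconst : ∀ᶠ s in 𝓝 0, κ s * H (h s) - edot p (ξ s) = c) :
    κ' * H (h 0) + κ 0 * fderiv ℝ H (h 0) h' - edot p ξ' = 0 := by
  have hpξ : HasDerivAt (fun s => edot p (ξ s)) (edot p ξ') 0 := by
    simpa [edot] using
      hasDerivWithinAt_univ.1 ((hasDerivWithinAt_const 0 univ p).edot hξ.hasDerivWithinAt)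
  exact ((hκ.mul (hH.hasFDerivAt.comp_hasDerivAt 0 hh)).sub hpξ).unique
    ((hasDerivAt_const 0 c).congr_of_eventuallyEq hconst)

variable {T : ℝ → (Fin n → ℝ) → (Fin r → ℝ) → ℝ → ℝ}
  {X : ℝ → (Fin n → ℝ) → (Fin r → ℝ) → ℝ → (Fin n → ℝ)}
  {U : ℝ → (Fin n → ℝ) → (Fin r → ℝ) → ℝ → (Fin r → ℝ)}
  {x : ℝ → Fin n → ℝ} {u : ℝ → Fin r → ℝ} {ψ : ℝ → Fin n → ℝ} {S : Set ℝ} {t ε : ℝ}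

theorem hasDerivWithinAt_noetherCharge_zero {u' : Fin r → ℝ}
    (hS : UniqueDiffWithinAt ℝ S t) (hε : 0 < ε)
    (hL : ContDiff ℝ 1 fun q : ℝ × (Fin n → ℝ) × (Fin r → ℝ) => L q.1 q.2.1 q.2.2)
    (hφ : ContDiff ℝ 1 fun q : ℝ × (Fin n → ℝ) × (Fin r → ℝ) => φ q.1 q.2.1 q.2.2)
    (hg : ContDiff ℝ 1 fun q : ℝ × (Fin n → ℝ) × (Fin r → ℝ) => g q.1 q.2.1 q.2.2)
    (hT : ContDiffOn ℝ 2
      (fun q : ℝ × (Fin n → ℝ) × (Fin r → ℝ) × ℝ => T q.1 q.2.1 q.2.2.1 q.2.2.2)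
      (univ ×ˢ univ ×ˢ univ ×ˢ Ioo (-ε) ε))
    (hX : ContDiffOn ℝ 2
      (fun q : ℝ × (Fin n → ℝ) × (Fin r → ℝ) × ℝ => X q.1 q.2.1 q.2.2.1 q.2.2.2)
      (univ ×ˢ univ ×ˢ univ ×ˢ Ioo (-ε) ε))
    (hU : ContDiffOn ℝ 2
      (fun q : ℝ × (Fin n → ℝ) × (Fin r → ℝ) × ℝ => U q.1 q.2.1 q.2.2.1 q.2.2.2)
      (univ ×ˢ univ ×ˢ univ ×ˢ Ioo (-ε) ε))
    (hid : ∀ (τ : ℝ) (y : Fin n → ℝ) (v : Fin r → ℝ),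
      T τ y v 0 = τ ∧ X τ y v 0 = y ∧ U τ y v 0 = v)
    (hx : HasDerivWithinAt x (φ t (x t) (u t)) S t) (hu : HasDerivWithinAt u u' S t)
    (hψ : HasDerivWithinAt ψ
      (fun i => -(fderiv ℝ (fun y => Ham L φ g t y (u t) ψ₀ (ψ t) lam) (x t) (Pi.single i 1))) S t)
    (hmax : ∀ s ∈ Ioo (-ε) ε,
      Ham L φ g t (x t) (U t (x t) (u t) s) ψ₀ (ψ t) lam ≤ Ham L φ g t (x t) (u t) ψ₀ (ψ t) lam)
    (hH : HasDerivWithinAt (fun τ => Ham L φ g τ (x τ) (u τ) ψ₀ (ψ τ) lam)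
      (deriv (fun τ => Ham L φ g τ (x t) (u t) ψ₀ (ψ t) lam) t) S t)
    (hinvL : ∀ s ∈ Ioo (-ε) ε, L t (x t) (u t) =
      L (T t (x t) (u t) s) (X t (x t) (u t) s) (U t (x t) (u t) s) *
        derivWithin (fun τ => T τ (x τ) (u τ) s) S t)
    (hinvX : ∀ s ∈ Ioo (-ε) ε, derivWithin (fun τ => X τ (x τ) (u τ) s) S t =
      derivWithin (fun τ => T τ (x τ) (u τ) s) S t •
        φ (T t (x t) (u t) s) (X t (x t) (u t) s) (U t (x t) (u t) s))
    (hinvg : ∀ s ∈ Ioo (-ε) ε, g t (x t) (u t) =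
      derivWithin (fun τ => T τ (x τ) (u τ) s) S t •
        g (T t (x t) (u t) s) (X t (x t) (u t) s) (U t (x t) (u t) s)) :
    HasDerivWithinAt (noetherCharge L φ g ψ₀ lam T X x u ψ) 0 S t := by
  have h0 : (0 : ℝ) ∈ Ioo (-ε) ε := ⟨neg_lt_zero.2 hε, hε⟩
  obtain ⟨hT0, hX0, hU0⟩ := hid t (x t) (u t)
  set H := hamProd L φ g ψ₀ (ψ t) lam
  have hHd : DifferentiableAt ℝ H (t, x t, u t) :=
    (contDiff_hamProd hL hφ hg (ψ t)).differentiable one_ne_zero _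
  set DH := fderiv ℝ H (t, x t, u t)
  have hUs : HasDerivAt (fun s => U t (x t) (u t) s) (deriv (fun s => U t (x t) (u t) s) 0) 0 :=
    (hU.differentiableAt_param t (x t) (u t) h0).hasDerivAt
  have hcontrol : DH (0, 0, deriv (fun s => U t (x t) (u t) s) 0) = 0 :=
    fderiv_apply_thd_eq_zero_of_eventually_le hHd hUs hU0
      (by filter_upwards [Ioo_mem_nhds h0.1 h0.2] with s hs using hmax s hs)
  have hconst : ∀ᶠ s in 𝓝 0, derivWithin (fun τ => T τ (x τ) (u τ) s) S t *
      H (T t (x t) (u t) s, X t (x t) (u t) s, U t (x t) (u t) s) -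
      edot (ψ t) (derivWithin (fun τ => X τ (x τ) (u τ) s) S t) =
      ψ₀ * L t (x t) (u t) + edot lam (g t (x t) (u t)) := by
    filter_upwards [Ioo_mem_nhds h0.1 h0.2] with s hs
    exact mul_ham_sub_edot_eq_of_invariant (ψ t) (hinvL s hs) (hinvX s hs) (hinvg s hs)
  have hinv := deriv_mul_comp_sub_edot_eq_zero_of_eventually_eq
    (by simpa [hT0, hX0, hU0] using hHd)
    ((hT.differentiableAt_param t (x t) (u t) h0).hasDerivAt.prodMk
      ((hX.differentiableAt_param t (x t) (u t) h0).hasDerivAt.prodMk hUs))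
    (hasDerivAt_derivWithin_trajectory hT hε hx hu hS)
    (hasDerivAt_derivWithin_trajectory hX hε hx hu hS) hconst
  have hκ0 : derivWithin (fun τ => T τ (x τ) (u τ) 0) S t = 1 := by
    simp only [fun τ => (hid τ (x τ) (u τ)).1]
    exact derivWithin_id' t S hS
  have hy : ∀ z, fderiv ℝ (fun y => Ham L φ g t y (u t) ψ₀ (ψ t) lam) (x t) z = DH (0, z, 0) :=
    fderiv_eq_fderiv_apply_snd hHd
  have ht : deriv (fun τ => Ham L φ g τ (x t) (u t) ψ₀ (ψ t) lam) t = DH (1, 0, 0) :=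
    deriv_eq_fderiv_apply_fst hHd
  have hHt : H (t, x t, u t) = Ham L φ g t (x t) (u t) ψ₀ (ψ t) lam := rfl
  have hG := (hψ.edot (hasDerivWithinAt_deriv_param_trajectory hX hε hx hu)).sub
    (hH.mul (hasDerivWithinAt_deriv_param_trajectory hT hε hx hu))
  refine hG.congr_deriv ?_
  rw [hT0, hX0, hU0, hκ0, one_mul, DH.apply_triple, hcontrol, hHt] at hinv
  rw [edot_neg_apply_single, hy, ht]
  linear_combination -hinv

end Noether

theorem noether_isoperimetric_optimal_control_general
    {n r k m : ℕ} {a b : ℝ} (hab : a < b)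
    (L : ℝ → (Fin n → ℝ) → (Fin r → ℝ) → ℝ)
    (φ : ℝ → (Fin n → ℝ) → (Fin r → ℝ) → (Fin n → ℝ))
    (g : ℝ → (Fin n → ℝ) → (Fin r → ℝ) → (Fin (k + m) → ℝ))
    (Ω : Set (Fin r → ℝ))
    (hL : ContDiff ℝ 1 fun q : ℝ × (Fin n → ℝ) × (Fin r → ℝ) => L q.1 q.2.1 q.2.2)
    (hφ : ContDiff ℝ 1 fun q : ℝ × (Fin n → ℝ) × (Fin r → ℝ) => φ q.1 q.2.1 q.2.2)
    (hg : ContDiff ℝ 1 fun q : ℝ × (Fin n → ℝ) × (Fin r → ℝ) => g q.1 q.2.1 q.2.2)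
    (x : ℝ → Fin n → ℝ) (u : ℝ → Fin r → ℝ) (ψ : ℝ → Fin n → ℝ)
    (ψ₀ : ℝ) (lam : Fin (k + m) → ℝ)
    (hu : ContDiffOn ℝ 1 u (Icc a b))
    -- (i) the control system `ẋ(t) = φ(t,x(t),u(t))`
    (hi : ∀ t ∈ Icc a b, HasDerivWithinAt x (φ t (x t) (u t)) (Icc a b) t)
    -- (ii) the adjoint system `ψ̇(t) = -∂H/∂y (t,x(t),u(t),ψ₀,ψ(t),λ)`
    (hii : ∀ t ∈ Icc a b,
      HasDerivWithinAt ψ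
        (fun i => -(fderiv ℝ (fun y => Ham L φ g t y (u t) ψ₀ (ψ t) lam) (x t)
          (Pi.single i 1))) (Icc a b) t)
    -- (iii) the maximality condition
    (hiii : ∀ t ∈ Icc a b, ∀ v ∈ Ω,
      Ham L φ g t (x t) v ψ₀ (ψ t) lam ≤ Ham L φ g t (x t) (u t) ψ₀ (ψ t) lam)
    -- (iv) `dH/dt = ∂H/∂t` along the extremal
    (hiv : ∀ t ∈ Icc a b,
      HasDerivWithinAt (fun τ => Ham L φ g τ (x τ) (u τ) ψ₀ (ψ τ) lam)
        (deriv (fun τ => Ham L φ g τ (x t) (u t) ψ₀ (ψ t) lam) t) (Icc a b) t)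
    -- the `C²` one-parameter family of transformations `h^s = (T,X,U)`
    (ε : ℝ) (hε : 0 < ε)
    (T : ℝ → (Fin n → ℝ) → (Fin r → ℝ) → ℝ → ℝ)
    (X : ℝ → (Fin n → ℝ) → (Fin r → ℝ) → ℝ → (Fin n → ℝ))
    (U : ℝ → (Fin n → ℝ) → (Fin r → ℝ) → ℝ → (Fin r → ℝ))
    (hT : ContDiffOn ℝ 2
      (fun q : ℝ × (Fin n → ℝ) × (Fin r → ℝ) × ℝ => T q.1 q.2.1 q.2.2.1 q.2.2.2)
      (univ ×ˢ univ ×ˢ univ ×ˢ Ioo (-ε) ε))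
    (hX : ContDiffOn ℝ 2
      (fun q : ℝ × (Fin n → ℝ) × (Fin r → ℝ) × ℝ => X q.1 q.2.1 q.2.2.1 q.2.2.2)
      (univ ×ˢ univ ×ˢ univ ×ˢ Ioo (-ε) ε))
    (hU : ContDiffOn ℝ 2
      (fun q : ℝ × (Fin n → ℝ) × (Fin r → ℝ) × ℝ => U q.1 q.2.1 q.2.2.1 q.2.2.2)
      (univ ×ˢ univ ×ˢ univ ×ˢ Ioo (-ε) ε))
    -- at `s = 0` the family reduces to the identity transformation
    (hid : ∀ (t : ℝ) (y : Fin n → ℝ) (v : Fin r → ℝ),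
      T t y v 0 = t ∧ X t y v 0 = y ∧ U t y v 0 = v)
    -- the transformed control takes values in `Ω`
    (hUΩ : ∀ t ∈ Icc a b, ∀ s ∈ Ioo (-ε) ε, U t (x t) (u t) s ∈ Ω)
    -- invariance of the Lagrangian
    (hinvL : ∀ t ∈ Icc a b, ∀ s ∈ Ioo (-ε) ε,
      L t (x t) (u t) =
        L (T t (x t) (u t) s) (X t (x t) (u t) s) (U t (x t) (u t) s) *
          derivWithin (fun τ => T τ (x τ) (u τ) s) (Icc a b) t)
    -- invariance of the dynamics
    (hinvX : ∀ t ∈ Icc a b, ∀ s ∈ Ioo (-ε) ε,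
      derivWithin (fun τ => X τ (x τ) (u τ) s) (Icc a b) t =
        (derivWithin (fun τ => T τ (x τ) (u τ) s) (Icc a b) t) •
          φ (T t (x t) (u t) s) (X t (x t) (u t) s) (U t (x t) (u t) s))
    -- invariance of the isoperimetric integrands
    (hinvg : ∀ t ∈ Icc a b, ∀ s ∈ Ioo (-ε) ε,
      g t (x t) (u t) =
        (derivWithin (fun τ => T τ (x τ) (u τ) s) (Icc a b) t) •
          g (T t (x t) (u t) s) (X t (x t) (u t) s) (U t (x t) (u t) s)) :
    -- conclusion: the conservation law
    ∃ C : ℝ, ∀ t ∈ Icc a b,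
      edot (ψ t) (deriv (fun s => X t (x t) (u t) s) 0) -
        Ham L φ g t (x t) (u t) ψ₀ (ψ t) lam *
          deriv (fun s => T t (x t) (u t) s) 0 = C := by
  refine ⟨noetherCharge L φ g ψ₀ lam T X x u ψ a,
    eq_of_hasDerivWithinAt_zero_Icc fun t ht => ?_⟩
  exact hasDerivWithinAt_noetherCharge_zero (uniqueDiffOn_Icc hab t ht) hε hL hφ hg hT hX hU hid
    (hi t ht) ((hu.differentiableOn one_ne_zero t ht).hasDerivWithinAt) (hii t ht)
    (fun s hs => hiii t ht _ (hUΩ t ht s hs)) (hiv t ht) (hinvL t ht) (hinvX t ht) (hinvg t ht)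

/-- **Noether's theorem for optimal control problems with isoperimetric
constraints.**  If `(x,u,ψ₀,ψ,λ)` satisfies the conclusions of the Pontryagin
maximum principle for problem `(P₁)` and the problem is invariant under a `C²`
one-parameter family of transformations `h^s = (T,X,U)`, then
`ψ(t)·∂X/∂s|₀ − H(t,x(t),u(t),ψ₀,ψ(t),λ) ∂T/∂s|₀` is constant on `[a,b]`:
a conservation law for `(P₁)`. -/
theorem noether_isoperimetric_optimal_control
    {n r k m : ℕ} {a b : ℝ} (hab : a < b)
    (L : ℝ → (Fin n → ℝ) → (Fin r → ℝ) → ℝ)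
    (φ : ℝ → (Fin n → ℝ) → (Fin r → ℝ) → (Fin n → ℝ))
    (g : ℝ → (Fin n → ℝ) → (Fin r → ℝ) → (Fin (k + m) → ℝ))
    (Ω : Set (Fin r → ℝ))
    (hL : ContDiff ℝ 1 fun q : ℝ × (Fin n → ℝ) × (Fin r → ℝ) => L q.1 q.2.1 q.2.2)
    (hφ : ContDiff ℝ 1 fun q : ℝ × (Fin n → ℝ) × (Fin r → ℝ) => φ q.1 q.2.1 q.2.2)
    (hg : ContDiff ℝ 1 fun q : ℝ × (Fin n → ℝ) × (Fin r → ℝ) => g q.1 q.2.1 q.2.2)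
    (x : ℝ → Fin n → ℝ) (u : ℝ → Fin r → ℝ) (ψ : ℝ → Fin n → ℝ)
    (ψ₀ : ℝ) (lam : Fin (k + m) → ℝ)
    (hx : ContDiffOn ℝ 1 x (Icc a b)) (hu : ContDiffOn ℝ 1 u (Icc a b))
    (hψ : ContDiffOn ℝ 1 ψ (Icc a b))
    (huΩ : ∀ t ∈ Icc a b, u t ∈ Ω)
    -- (i) the control system `ẋ(t) = φ(t,x(t),u(t))`
    (hi : ∀ t ∈ Icc a b, HasDerivWithinAt x (φ t (x t) (u t)) (Icc a b) t)
    -- (ii) the adjoint system `ψ̇(t) = -∂H/∂y (t,x(t),u(t),ψ₀,ψ(t),λ)`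
    (hii : ∀ t ∈ Icc a b,
      HasDerivWithinAt ψ
        (fun i => -(fderiv ℝ (fun y => Ham L φ g t y (u t) ψ₀ (ψ t) lam) (x t)
          (Pi.single i 1))) (Icc a b) t)
    -- (iii) the maximality condition
    (hiii : ∀ t ∈ Icc a b, ∀ v ∈ Ω,
      Ham L φ g t (x t) v ψ₀ (ψ t) lam ≤ Ham L φ g t (x t) (u t) ψ₀ (ψ t) lam)
    -- (iv) `dH/dt = ∂H/∂t` along the extremal
    (hiv : ∀ t ∈ Icc a b,
      HasDerivWithinAt (fun τ => Ham L φ g τ (x τ) (u τ) ψ₀ (ψ τ) lam)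
        (deriv (fun τ => Ham L φ g τ (x t) (u t) ψ₀ (ψ t) lam) t) (Icc a b) t)
    -- the `C²` one-parameter family of transformations `h^s = (T,X,U)`
    (ε : ℝ) (hε : 0 < ε)
    (T : ℝ → (Fin n → ℝ) → (Fin r → ℝ) → ℝ → ℝ)
    (X : ℝ → (Fin n → ℝ) → (Fin r → ℝ) → ℝ → (Fin n → ℝ))
    (U : ℝ → (Fin n → ℝ) → (Fin r → ℝ) → ℝ → (Fin r → ℝ))
    (hT : ContDiffOn ℝ 2
      (fun q : ℝ × (Fin n → ℝ) × (Fin r → ℝ) × ℝ => T q.1 q.2.1 q.2.2.1 q.2.2.2)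
      (univ ×ˢ univ ×ˢ univ ×ˢ Ioo (-ε) ε))
    (hX : ContDiffOn ℝ 2
      (fun q : ℝ × (Fin n → ℝ) × (Fin r → ℝ) × ℝ => X q.1 q.2.1 q.2.2.1 q.2.2.2)
      (univ ×ˢ univ ×ˢ univ ×ˢ Ioo (-ε) ε))
    (hU : ContDiffOn ℝ 2
      (fun q : ℝ × (Fin n → ℝ) × (Fin r → ℝ) × ℝ => U q.1 q.2.1 q.2.2.1 q.2.2.2)
      (univ ×ˢ univ ×ˢ univ ×ˢ Ioo (-ε) ε))
    -- at `s = 0` the family reduces to the identity transformation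
    (hid : ∀ (t : ℝ) (y : Fin n → ℝ) (v : Fin r → ℝ),
      T t y v 0 = t ∧ X t y v 0 = y ∧ U t y v 0 = v)
    -- the transformed control takes values in `Ω`
    (hUΩ : ∀ t ∈ Icc a b, ∀ s ∈ Ioo (-ε) ε, U t (x t) (u t) s ∈ Ω)
    -- invariance of the Lagrangian
    (hinvL : ∀ t ∈ Icc a b, ∀ s ∈ Ioo (-ε) ε,
      L t (x t) (u t) =
        L (T t (x t) (u t) s) (X t (x t) (u t) s) (U t (x t) (u t) s) *
          derivWithin (fun τ => T τ (x τ) (u τ) s) (Icc a b) t)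
    -- invariance of the dynamics
    (hinvX : ∀ t ∈ Icc a b, ∀ s ∈ Ioo (-ε) ε,
      derivWithin (fun τ => X τ (x τ) (u τ) s) (Icc a b) t =
        (derivWithin (fun τ => T τ (x τ) (u τ) s) (Icc a b) t) •
          φ (T t (x t) (u t) s) (X t (x t) (u t) s) (U t (x t) (u t) s))
    -- invariance of the isoperimetric integrands
    (hinvg : ∀ t ∈ Icc a b, ∀ s ∈ Ioo (-ε) ε,
      g t (x t) (u t) =
        (derivWithin (fun τ => T τ (x τ) (u τ) s) (Icc a b) t) •
          g (T t (x t) (u t) s) (X t (x t) (u t) s) (U t (x t) (u t) s)) :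
    -- conclusion: the conservation law
    ∃ C : ℝ, ∀ t ∈ Icc a b,
      edot (ψ t) (deriv (fun s => X t (x t) (u t) s) 0) -
        Ham L φ g t (x t) (u t) ψ₀ (ψ t) lam *
          deriv (fun s => T t (x t) (u t) s) 0 = C :=
  noether_isoperimetric_optimal_control_general hab L φ g Ω hL hφ hg x u ψ ψ₀ lam hu hi hii hiii hiv
    ε hε T X U hT hX hU hid hUΩ hinvL hinvX hinvg

end
end
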